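/- arXiv:1409.5032 — 2 statements merged into one kernel-verified Lean document; each statement's English description precedes it below -/
import Mathlib

section
/- The symplectic group action on characteristics, given for σ = [[A,B],[C,D]] ∈ Sp(2g, Z) by σ·m = (D m' - C m'' + diag(C Dᵀ), -B m' + A m'' + diag(A Bᵀ)) taken mod 2, preserves the parity e(m) = (-1)^{m'·m''} of each characteristic. -/
open Matrix

/-- An integral characteristic: a pair (m', m'') of integer vectors of length g. -/
abbrev IChr (g : ℕ) := (Fin g → ℤ) × (Fin g → ℤ)

/-- The parity e(m) = (-1)^{m'·m''}: +1 if m'·m'' is even, -1 if odd. -/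
def eps {g : ℕ} (m : IChr g) : ℤ := if (∑ i, m.1 i * m.2 i) % 2 = 0 then 1 else -1

/-- The vector of diagonal entries of a square matrix. -/
def diagVec {g : ℕ} (M : Matrix (Fin g) (Fin g) ℤ) : Fin g → ℤ := fun i => M i i

/-- The action of σ = [[A,B],[C,D]] ∈ Sp(2g,ℤ) on characteristics:
σ·m = (D m' - C m'' + diag(CDᵀ), -B m' + A m'' + diag(ABᵀ)). -/
def sympAct {g : ℕ} (A B C D : Matrix (Fin g) (Fin g) ℤ) (m : IChr g) : IChr g :=
  (D.mulVec m.1 - C.mulVec m.2 + diagVec (C * Dᵀ),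
   -(B.mulVec m.1) + A.mulVec m.2 + diagVec (A * Bᵀ))

section Aux
open Finset
open Matrix Finset

lemma z2_add_self (x : ZMod 2) : x + x = 0 := by revert x; decide
lemma z2_mul_self (x : ZMod 2) : x * x = x := by revert x; decide
lemma z2_sub (x y : ZMod 2) : x - y = x + y := by revert x y; decide
lemma z2_neg (x : ZMod 2) : -x = x := by revert x; decide

lemma sum_pairs {g : ℕ} (f : Fin g → Fin g → ZMod 2) (hf : ∀ i j, f i j = f j i) :
    ∑ i, ∑ j, f i j = ∑ i, f i i := by
  classical
  rw [← Finset.sum_product' (s := univ) (t := univ) (f := f)]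
  rw [← Finset.sum_filter_add_sum_filter_not (univ ×ˢ univ) (fun p => p.1 = p.2)]
  have h1 : ∑ p ∈ (univ ×ˢ univ).filter (fun p => p.1 = p.2), f p.1 p.2 = ∑ i, f i i := by
    refine Finset.sum_nbij' (fun p => p.1) (fun i => (i, i)) ?_ ?_ ?_ ?_ ?_ <;>
      simp +contextual [Finset.mem_filter]
  have h2 : ∑ p ∈ (univ ×ˢ univ).filter (fun p => ¬ p.1 = p.2), f p.1 p.2 = 0 := by
    apply Finset.sum_involution (g := fun p _ => Prod.swap p)
    · intro p hp; show f p.1 p.2 + f p.2 p.1 = 0; rw [hf p.2 p.1]; exact z2_add_self _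
    · intro p hp _; simp only [Finset.mem_filter, Finset.mem_product] at hp
      intro h; exact hp.2 (congrArg Prod.fst h.symm)
    · intro p hp; simp only [Finset.mem_filter, Finset.mem_product, Prod.fst_swap,
        Prod.snd_swap] at *; exact ⟨⟨Finset.mem_univ _, Finset.mem_univ _⟩, fun h => hp.2 h.symm⟩
    · intro p hp; rfl
  rw [h1, h2, add_zero]

lemma symm_apply {g : ℕ} {S : Matrix (Fin g) (Fin g) (ZMod 2)} (hS : Sᵀ = S)
    (i j : Fin g) : S i j = S j i := by conv_lhs => rw [← hS, Matrix.transpose_apply]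

lemma quadForm {g : ℕ} (S : Matrix (Fin g) (Fin g) (ZMod 2)) (hS : Sᵀ = S)
    (x : Fin g → ZMod 2) : x ⬝ᵥ (S *ᵥ x) = (fun i => S i i) ⬝ᵥ x := by
  have h : x ⬝ᵥ (S *ᵥ x) = ∑ i, ∑ j, x i * S i j * x j := by
    simp [dotProduct, mulVec, Finset.mul_sum, mul_assoc]
  rw [h, sum_pairs (fun i j => x i * S i j * x j)
      (by intro i j; show x i * S i j * x j = x j * S j i * x i
          rw [symm_apply hS i j]; ring)]
  simp only [dotProduct]
  congr 1; funext i
  have h2 : x i * S i i * x i = S i i * (x i * x i) := by ring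
  rw [h2, z2_mul_self]

lemma trace_eq_sum_diag_mul {g : ℕ} (S T : Matrix (Fin g) (Fin g) (ZMod 2))
    (hS : Sᵀ = S) (hT : Tᵀ = T) :
    (fun i => S i i) ⬝ᵥ (fun i => T i i) = Matrix.trace (S * T) := by
  have h : Matrix.trace (S * T) = ∑ i, ∑ j, S i j * T i j := by
    simp only [Matrix.trace, Matrix.diag, Matrix.mul_apply]
    congr 1; funext i; congr 1; funext j
    rw [symm_apply hT j i]
  rw [h, sum_pairs (fun i j => S i j * T i j)
      (by intro i j; show S i j * T i j = S j i * T j i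
          rw [symm_apply hS i j, symm_apply hT i j])]
  rfl

lemma trace_sq {g : ℕ} (M : Matrix (Fin g) (Fin g) (ZMod 2)) :
    Matrix.trace (M * M) = Matrix.trace M := by
  have h : Matrix.trace (M * M) = ∑ i, ∑ j, M i j * M j i := by
    simp [Matrix.trace, Matrix.diag, Matrix.mul_apply]
  rw [h, sum_pairs (fun i j => M i j * M j i)
      (by intro i j; show M i j * M j i = M j i * M i j; ring)]
  simp only [Matrix.trace, Matrix.diag]
  congr 1; funext i; exact z2_mul_self _

lemma addM {g : ℕ} (M : Matrix (Fin g) (Fin g) (ZMod 2)) : M + M = 0 := by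
  ext i j; exact z2_add_self _

lemma mvmv {g : ℕ} (M N : Matrix (Fin g) (Fin g) (ZMod 2)) (x y : Fin g → ZMod 2) :
    (M *ᵥ x) ⬝ᵥ (N *ᵥ y) = x ⬝ᵥ ((Mᵀ * N) *ᵥ y) := by
  rw [Matrix.dotProduct_mulVec, Matrix.dotProduct_mulVec, ← Matrix.vecMul_vecMul,
    Matrix.vecMul_transpose]

lemma key {g : ℕ} (A B C D : Matrix (Fin g) (Fin g) (ZMod 2))
    (h1 : A * Bᵀ = B * Aᵀ) (h2 : C * Dᵀ = D * Cᵀ) (h4 : Aᵀ * C = Cᵀ * A)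
    (h5 : Bᵀ * D = Dᵀ * B) (h6 : Dᵀ * A + Bᵀ * C = 1) (a b : Fin g → ZMod 2) :
    (D *ᵥ a + C *ᵥ b + (fun i => (C * Dᵀ) i i)) ⬝ᵥ
      (B *ᵥ a + A *ᵥ b + (fun i => (A * Bᵀ) i i)) = a ⬝ᵥ b := by
  have sAB : (A * Bᵀ)ᵀ = A * Bᵀ := by
    rw [Matrix.transpose_mul, Matrix.transpose_transpose, ← h1]
  have sCD : (C * Dᵀ)ᵀ = C * Dᵀ := by
    rw [Matrix.transpose_mul, Matrix.transpose_transpose, ← h2]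
  have hBC : Bᵀ * C = 1 + Dᵀ * A := by
    rw [← h6, add_comm (Dᵀ * A) (Bᵀ * C), add_assoc, addM, add_zero]
  have hDA : Dᵀ * A = 1 + Bᵀ * C := by
    rw [← h6, add_assoc, addM, add_zero]
  -- group identities
  have E1 : Dᵀ * B + Dᵀ * ((A * Bᵀ) * D) + Bᵀ * ((C * Dᵀ) * B) = 0 := by
    have k1 : Bᵀ * ((C * Dᵀ) * B) = (Bᵀ * C) * (Dᵀ * B) := by noncomm_ring
    have k2 : Dᵀ * ((A * Bᵀ) * D) = (Dᵀ * A) * (Bᵀ * D) := by noncomm_ring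
    rw [k1, k2, hBC, h5, add_mul, one_mul]
    exact addM _
  have E2 : Cᵀ * A + Cᵀ * ((A * Bᵀ) * C) + Aᵀ * ((C * Dᵀ) * A) = 0 := by
    have k1 : Cᵀ * ((A * Bᵀ) * C) = (Cᵀ * A) * (Bᵀ * C) := by noncomm_ring
    have k2 : Aᵀ * ((C * Dᵀ) * A) = (Aᵀ * C) * (Dᵀ * A) := by noncomm_ring
    rw [k1, k2, h4, hDA, mul_add, mul_one]
    exact addM _
  -- the nine terms
  have t1 : (D *ᵥ a) ⬝ᵥ (B *ᵥ a) = a ⬝ᵥ ((Dᵀ * B) *ᵥ a) := mvmv D B a a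
  have t2 : (D *ᵥ a) ⬝ᵥ (A *ᵥ b) = a ⬝ᵥ ((Dᵀ * A) *ᵥ b) := mvmv D A a b
  have t4 : (C *ᵥ b) ⬝ᵥ (B *ᵥ a) = a ⬝ᵥ ((Bᵀ * C) *ᵥ b) := by
    rw [dotProduct_comm]; exact mvmv B C a b
  have t5 : (C *ᵥ b) ⬝ᵥ (A *ᵥ b) = b ⬝ᵥ ((Cᵀ * A) *ᵥ b) := mvmv C A b b
  have t3 : (D *ᵥ a) ⬝ᵥ (fun i => (A * Bᵀ) i i) = a ⬝ᵥ ((Dᵀ * ((A * Bᵀ) * D)) *ᵥ a) := by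
    rw [dotProduct_comm, ← quadForm (A * Bᵀ) sAB (D *ᵥ a), Matrix.mulVec_mulVec, mvmv]
  have t6 : (C *ᵥ b) ⬝ᵥ (fun i => (A * Bᵀ) i i) = b ⬝ᵥ ((Cᵀ * ((A * Bᵀ) * C)) *ᵥ b) := by
    rw [dotProduct_comm, ← quadForm (A * Bᵀ) sAB (C *ᵥ b), Matrix.mulVec_mulVec, mvmv]
  have t7 : (fun i => (C * Dᵀ) i i) ⬝ᵥ (B *ᵥ a) = a ⬝ᵥ ((Bᵀ * ((C * Dᵀ) * B)) *ᵥ a) := by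
    rw [← quadForm (C * Dᵀ) sCD (B *ᵥ a), Matrix.mulVec_mulVec, mvmv]
  have t8 : (fun i => (C * Dᵀ) i i) ⬝ᵥ (A *ᵥ b) = b ⬝ᵥ ((Aᵀ * ((C * Dᵀ) * A)) *ᵥ b) := by
    rw [← quadForm (C * Dᵀ) sCD (A *ᵥ b), Matrix.mulVec_mulVec, mvmv]
  have t9 : (fun i => (C * Dᵀ) i i) ⬝ᵥ (fun i => (A * Bᵀ) i i) = 0 := by
    rw [trace_eq_sum_diag_mul _ _ sCD sAB]
    have k1 : (C * Dᵀ) * (A * Bᵀ) = C * (Dᵀ * A * Bᵀ) := by noncomm_ring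
    rw [k1, Matrix.trace_mul_comm, Matrix.mul_assoc (Dᵀ * A) Bᵀ C, hBC, Matrix.mul_add,
      Matrix.mul_one, Matrix.trace_add, trace_sq (Dᵀ * A)]
    exact z2_add_self _
  -- grouped sums
  have ea : a ⬝ᵥ ((Dᵀ * B) *ᵥ a) + a ⬝ᵥ ((Dᵀ * ((A * Bᵀ) * D)) *ᵥ a) +
      a ⬝ᵥ ((Bᵀ * ((C * Dᵀ) * B)) *ᵥ a) = 0 := by
    rw [← dotProduct_add, ← dotProduct_add, ← Matrix.add_mulVec, ← Matrix.add_mulVec, E1,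
      Matrix.zero_mulVec, dotProduct_zero]
  have eb : b ⬝ᵥ ((Cᵀ * A) *ᵥ b) + b ⬝ᵥ ((Cᵀ * ((A * Bᵀ) * C)) *ᵥ b) +
      b ⬝ᵥ ((Aᵀ * ((C * Dᵀ) * A)) *ᵥ b) = 0 := by
    rw [← dotProduct_add, ← dotProduct_add, ← Matrix.add_mulVec, ← Matrix.add_mulVec, E2,
      Matrix.zero_mulVec, dotProduct_zero]
  have ec : a ⬝ᵥ ((Dᵀ * A) *ᵥ b) + a ⬝ᵥ ((Bᵀ * C) *ᵥ b) = a ⬝ᵥ b := by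
    rw [← dotProduct_add, ← Matrix.add_mulVec, h6, Matrix.one_mulVec]
  rw [add_dotProduct, add_dotProduct, dotProduct_add, dotProduct_add, dotProduct_add,
    dotProduct_add, dotProduct_add, dotProduct_add]
  rw [t1, t2, t3, t4, t5, t6, t7, t8, t9]
  linear_combination ea + eb + ec


lemma castMulVec {g : ℕ} (M : Matrix (Fin g) (Fin g) ℤ) (v : Fin g → ℤ) (i : Fin g) :
    (((M *ᵥ v) i : ℤ) : ZMod 2)
      = ((M.map (Int.cast : ℤ → ZMod 2)) *ᵥ (fun j => ((v j : ℤ) : ZMod 2))) i := by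
  simp [Matrix.mulVec, dotProduct, Matrix.map_apply]

lemma subM {g : ℕ} (X Y : Matrix (Fin g) (Fin g) (ZMod 2)) : X - Y = X + Y := by
  ext i j; exact z2_sub _ _

end Aux

/-- The symplectic action on characteristics preserves the parity e(m) (the parity only
depends on the characteristic mod 2, and the formula is taken mod 2). -/
theorem sympAct_preserves_parity {g : ℕ} (A B C D : Matrix (Fin g) (Fin g) ℤ)
    (hσ : Matrix.fromBlocks A B C D ∈ Matrix.symplecticGroup (Fin g) ℤ)
    (m : IChr g) :
    eps (sympAct A B C D m) = eps m := by
  -- integer relations from membership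
  have hm := SymplecticGroup.mem_iff.mp hσ
  rw [Matrix.J, fromBlocks_transpose, fromBlocks_multiply, fromBlocks_multiply,
    fromBlocks_inj] at hm
  obtain ⟨e1, -, -, e4⟩ := hm
  simp only [Matrix.mul_zero, Matrix.mul_one, Matrix.mul_neg, Matrix.zero_mul,
    Matrix.one_mul, Matrix.neg_mul, zero_add, add_zero, neg_zero] at e1 e4
  have i1 : A * Bᵀ = B * Aᵀ := by
    rw [← sub_eq_add_neg, sub_eq_zero] at e1; exact e1.symm
  have i2 : C * Dᵀ = D * Cᵀ := by
    have := e4; rw [← sub_eq_add_neg, sub_eq_zero] at this; exact this.symm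
  -- relations from the transpose
  have hmt := SymplecticGroup.mem_iff.mp (SymplecticGroup.transpose_mem hσ)
  rw [fromBlocks_transpose] at hmt
  rw [Matrix.J, fromBlocks_transpose, fromBlocks_multiply, fromBlocks_multiply,
    fromBlocks_inj] at hmt
  obtain ⟨f1, f2, -, f4⟩ := hmt
  simp only [Matrix.mul_zero, Matrix.mul_one, Matrix.mul_neg, Matrix.zero_mul,
    Matrix.one_mul, Matrix.neg_mul, zero_add, add_zero, neg_zero,
    Matrix.transpose_transpose] at f1 f2 f4
  have i4 : Aᵀ * C = Cᵀ * A := by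
    have := f1; rw [← sub_eq_add_neg, sub_eq_zero] at this; exact this.symm
  have i5 : Bᵀ * D = Dᵀ * B := by
    have := f4; rw [← sub_eq_add_neg, sub_eq_zero] at this; exact this.symm
  have i6 : Dᵀ * A = 1 + Bᵀ * C := by
    have h := congrArg Matrix.transpose f2
    simp only [Matrix.transpose_add, Matrix.transpose_neg, Matrix.transpose_mul,
      Matrix.transpose_transpose, Matrix.transpose_one] at h
    -- h : Bᵀ * C + -(Dᵀ * A) = -1
    have h2 : Dᵀ * A - Bᵀ * C = 1 := by
      calc Dᵀ * A - Bᵀ * C = -(Bᵀ * C + -(Dᵀ * A)) := by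
            rw [neg_add, neg_neg, add_comm, sub_eq_add_neg]
        _ = 1 := by rw [h, neg_neg]
    rw [← h2]; abel
  -- map everything to ZMod 2
  set c : ℤ → ZMod 2 := Int.cast with hc
  have hrh : ∀ (M N : Matrix (Fin g) (Fin g) ℤ),
      (M * N).map c = M.map c * N.map c := by
    intro M N; exact Matrix.map_mul (f := Int.castRingHom (ZMod 2))
  have htr : ∀ (M : Matrix (Fin g) (Fin g) ℤ), (Mᵀ).map c = (M.map c)ᵀ :=
    fun M => Matrix.transpose_map
  have h1 : A.map c * (B.map c)ᵀ = B.map c * (A.map c)ᵀ := by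
    have := congrArg (fun M => Matrix.map M c) i1
    simpa only [hrh, htr] using this
  have h2 : C.map c * (D.map c)ᵀ = D.map c * (C.map c)ᵀ := by
    have := congrArg (fun M => Matrix.map M c) i2
    simpa only [hrh, htr] using this
  have h4 : (A.map c)ᵀ * C.map c = (C.map c)ᵀ * A.map c := by
    have := congrArg (fun M => Matrix.map M c) i4
    simpa only [hrh, htr] using this
  have h5 : (B.map c)ᵀ * D.map c = (D.map c)ᵀ * B.map c := by
    have := congrArg (fun M => Matrix.map M c) i5
    simpa only [hrh, htr] using this
  have h6 : (D.map c)ᵀ * A.map c + (B.map c)ᵀ * C.map c = 1 := by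
    have hone : (1 : Matrix (Fin g) (Fin g) ℤ).map c = 1 :=
      Matrix.map_one c Int.cast_zero Int.cast_one
    have hadd : ∀ (M N : Matrix (Fin g) (Fin g) ℤ), (M + N).map c = M.map c + N.map c :=
      fun M N => Matrix.map_add c (fun x y => Int.cast_add x y) M N
    have := congrArg (fun M => Matrix.map M c) i6
    simp only [hrh, htr, hadd, hone] at this
    rw [this, add_assoc, addM, add_zero]
  -- reduce the goal to a ZMod 2 statement
  set a₂ : Fin g → ZMod 2 := fun j => ((m.1 j : ℤ) : ZMod 2) with ha₂
  set b₂ : Fin g → ZMod 2 := fun j => ((m.2 j : ℤ) : ZMod 2) with hb₂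
  have hkey := key (A.map c) (B.map c) (C.map c) (D.map c) h1 h2 h4 h5 h6 a₂ b₂
  suffices hs : ((∑ i, (sympAct A B C D m).1 i * (sympAct A B C D m).2 i : ℤ) : ZMod 2)
      = ((∑ i, m.1 i * m.2 i : ℤ) : ZMod 2) by
    rw [ZMod.intCast_eq_intCast_iff'] at hs
    push_cast at hs
    unfold eps
    rw [hs]
  push_cast
  calc (∑ i, ((((sympAct A B C D m).1 i : ℤ) : ZMod 2) * (((sympAct A B C D m).2 i : ℤ) : ZMod 2)))
      = (D.map c *ᵥ a₂ + C.map c *ᵥ b₂ + (fun i => (C.map c * (D.map c)ᵀ) i i)) ⬝ᵥ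
        (B.map c *ᵥ a₂ + A.map c *ᵥ b₂ + (fun i => (A.map c * (B.map c)ᵀ) i i)) := by
        apply Finset.sum_congr rfl
        intro i _
        have hu : (((sympAct A B C D m).1 i : ℤ) : ZMod 2)
            = (D.map c *ᵥ a₂ + C.map c *ᵥ b₂ + (fun i => (C.map c * (D.map c)ᵀ) i i)) i := by
          show ((((D *ᵥ m.1 - C *ᵥ m.2 + diagVec (C * Dᵀ)) i : ℤ)) : ZMod 2) = _
          rw [Pi.add_apply, Pi.sub_apply]
          push_cast
          rw [z2_sub, castMulVec D m.1 i, castMulVec C m.2 i]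
          simp only [Pi.add_apply]
          congr 1
          show (((C * Dᵀ) i i : ℤ) : ZMod 2) = (C.map c * (D.map c)ᵀ) i i
          rw [← htr, ← hrh]
          simp [Matrix.map_apply, hc]
        have hv : (((sympAct A B C D m).2 i : ℤ) : ZMod 2)
            = (B.map c *ᵥ a₂ + A.map c *ᵥ b₂ + (fun i => (A.map c * (B.map c)ᵀ) i i)) i := by
          show ((((-(B *ᵥ m.1) + A *ᵥ m.2 + diagVec (A * Bᵀ)) i : ℤ)) : ZMod 2) = _
          rw [Pi.add_apply, Pi.add_apply, Pi.neg_apply]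
          push_cast
          rw [z2_neg, castMulVec B m.1 i, castMulVec A m.2 i]
          simp only [Pi.add_apply]
          congr 1
          show (((A * Bᵀ) i i : ℤ) : ZMod 2) = (A.map c * (B.map c)ᵀ) i i
          rw [← htr, ← hrh]
          simp [Matrix.map_apply, hc]
        rw [hu, hv]
    _ = a₂ ⬝ᵥ b₂ := hkey
    _ = ∑ i, ((m.1 i : ℤ) : ZMod 2) * ((m.2 i : ℤ) : ZMod 2) := rfl
end

section
/- The symplectic group action on characteristics mod 2 preserves the quantity e(m_1, m_2, m_3) = e(m_1)e(m_2)e(m_3)e(m_1+m_2+m_3) for all triples of characteristics; in particular it sends azygetic triples to azygetic triples. -/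
open Matrix

/-- e(m₁,m₂,m₃) = e(m₁)e(m₂)e(m₃)e(m₁+m₂+m₃). -/
def e3 {g : ℕ} (m₁ m₂ m₃ : IChr g) : ℤ := eps m₁ * eps m₂ * eps m₃ * eps (m₁ + m₂ + m₃)

/- ### Auxiliary machinery -/

/-- The self-pairing m'·m''. -/
def sdot {g : ℕ} (m : IChr g) : ℤ := m.1 ⬝ᵥ m.2

/-- The symmetric bilinear pairing. -/
def bl {g : ℕ} (m n : IChr g) : ℤ := m.1 ⬝ᵥ n.2 + n.1 ⬝ᵥ m.2

lemma eps_eq {g : ℕ} (m : IChr g) : eps m = if sdot m % 2 = 0 then 1 else -1 := rfl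

lemma if_mul_if (a b : ℤ) :
    (if a % 2 = 0 then (1 : ℤ) else -1) * (if b % 2 = 0 then (1 : ℤ) else -1)
      = if (a + b) % 2 = 0 then (1 : ℤ) else -1 := by
  rcases Int.emod_two_eq a with h | h <;> rcases Int.emod_two_eq b with h' | h' <;>
    [skip; skip; skip; skip] <;>
    · have hab : (a + b) % 2 = 0 ∨ (a + b) % 2 = 1 := Int.emod_two_eq _
      simp only [h, h']
      rcases hab with h2 | h2 <;> simp_all <;> omega

lemma e3_eq {g : ℕ} (m₁ m₂ m₃ : IChr g) :
    e3 m₁ m₂ m₃ =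
      if (sdot m₁ + sdot m₂ + sdot m₃ + sdot (m₁ + m₂ + m₃)) % 2 = 0 then 1 else -1 := by
  rw [e3, eps_eq, eps_eq, eps_eq, eps_eq, if_mul_if, if_mul_if, if_mul_if]

lemma dot_mulVec_swap {g : ℕ} (M : Matrix (Fin g) (Fin g) ℤ) (u v : Fin g → ℤ) :
    u ⬝ᵥ M.mulVec v = v ⬝ᵥ Mᵀ.mulVec u := by
  rw [Matrix.mulVec_transpose, Matrix.dotProduct_mulVec, dotProduct_comm]

lemma mulVec_dot_mulVec {g : ℕ} (M N : Matrix (Fin g) (Fin g) ℤ) (u v : Fin g → ℤ) :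
    M.mulVec u ⬝ᵥ N.mulVec v = u ⬝ᵥ ((Mᵀ * N).mulVec v) := by
  rw [Matrix.dotProduct_mulVec, Matrix.dotProduct_mulVec, ← Matrix.vecMul_vecMul,
    Matrix.vecMul_transpose]

section Main

variable {g : ℕ} (A B C D : Matrix (Fin g) (Fin g) ℤ)

/-- The linear part of the action. -/
def linAct (m : IChr g) : IChr g :=
  (D.mulVec m.1 - C.mulVec m.2, -(B.mulVec m.1) + A.mulVec m.2)

/-- The cross term of a characteristic against the constant shift. -/
def crossT (m : IChr g) : ℤ :=
  (linAct A B C D m).1 ⬝ᵥ diagVec (A * Bᵀ) + diagVec (C * Dᵀ) ⬝ᵥ (linAct A B C D m).2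

lemma sympAct_decomp (m : IChr g) :
    sympAct A B C D m = ((linAct A B C D m).1 + diagVec (C * Dᵀ),
      (linAct A B C D m).2 + diagVec (A * Bᵀ)) := rfl

variable (hDA : Dᵀ * A = 1 + Bᵀ * C) (hAD : Aᵀ * D = 1 + Cᵀ * B)
  (hBD : Bᵀ * D = Dᵀ * B) (hAC : Aᵀ * C = Cᵀ * A)

include hDA hAD hBD hAC in
/-- Key pairing lemma: the linear part preserves the pairing mod 2. -/
lemma bl_linAct (m n : IChr g) :
    ∃ k : ℤ, bl (linAct A B C D m) (linAct A B C D n) = bl m n + 2 * k := by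
  refine ⟨m.1 ⬝ᵥ ((Bᵀ * C).mulVec n.2) - m.1 ⬝ᵥ ((Dᵀ * B).mulVec n.1)
    - m.2 ⬝ᵥ ((Cᵀ * A).mulVec n.2) + m.2 ⬝ᵥ ((Cᵀ * B).mulVec n.1), ?_⟩
  show (D.mulVec m.1 - C.mulVec m.2) ⬝ᵥ (-(B.mulVec n.1) + A.mulVec n.2)
      + (D.mulVec n.1 - C.mulVec n.2) ⬝ᵥ (-(B.mulVec m.1) + A.mulVec m.2)
      = (m.1 ⬝ᵥ n.2 + n.1 ⬝ᵥ m.2) + 2 * _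
  simp only [sub_dotProduct, dotProduct_add, dotProduct_neg,
    mulVec_dot_mulVec]
  have e1 : m.1 ⬝ᵥ ((Dᵀ * A).mulVec n.2) = m.1 ⬝ᵥ n.2 + m.1 ⬝ᵥ ((Bᵀ * C).mulVec n.2) := by
    rw [hDA, Matrix.add_mulVec, Matrix.one_mulVec, dotProduct_add]
  have e2 : n.1 ⬝ᵥ ((Dᵀ * B).mulVec m.1) = m.1 ⬝ᵥ ((Dᵀ * B).mulVec n.1) := by
    rw [dot_mulVec_swap, Matrix.transpose_mul, Matrix.transpose_transpose, hBD]
  have e3' : n.1 ⬝ᵥ ((Dᵀ * A).mulVec m.2) = n.1 ⬝ᵥ m.2 + m.2 ⬝ᵥ ((Cᵀ * B).mulVec n.1) := by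
    rw [dot_mulVec_swap, Matrix.transpose_mul, Matrix.transpose_transpose, hAD,
      Matrix.add_mulVec, Matrix.one_mulVec, dotProduct_add,
      dotProduct_comm m.2 n.1]
  have e4 : n.2 ⬝ᵥ ((Cᵀ * B).mulVec m.1) = m.1 ⬝ᵥ ((Bᵀ * C).mulVec n.2) := by
    rw [dot_mulVec_swap, Matrix.transpose_mul, Matrix.transpose_transpose]
  have e5 : n.2 ⬝ᵥ ((Cᵀ * A).mulVec m.2) = m.2 ⬝ᵥ ((Cᵀ * A).mulVec n.2) := by
    rw [dot_mulVec_swap, Matrix.transpose_mul, Matrix.transpose_transpose, hAC]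
  rw [e1, e2, e3', e4, e5]
  ring

include hDA hAD hBD hAC in
lemma bl_sympAct (m n : IChr g) :
    ∃ k : ℤ, bl (sympAct A B C D m) (sympAct A B C D n)
      = bl m n + crossT A B C D m + crossT A B C D n + 2 * k := by
  obtain ⟨k, hk⟩ := bl_linAct A B C D hDA hAD hBD hAC m n
  refine ⟨k + diagVec (C * Dᵀ) ⬝ᵥ diagVec (A * Bᵀ), ?_⟩
  rw [sympAct_decomp, sympAct_decomp]
  show ((linAct A B C D m).1 + diagVec (C * Dᵀ)) ⬝ᵥ ((linAct A B C D n).2 + diagVec (A * Bᵀ))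
      + ((linAct A B C D n).1 + diagVec (C * Dᵀ)) ⬝ᵥ ((linAct A B C D m).2 + diagVec (A * Bᵀ))
      = _
  simp only [add_dotProduct, dotProduct_add]
  have hb : (linAct A B C D m).1 ⬝ᵥ (linAct A B C D n).2
      + (linAct A B C D n).1 ⬝ᵥ (linAct A B C D m).2 = bl m n + 2 * k := hk
  unfold crossT
  linarith [hb]

lemma sdot_triple (x y z : IChr g) :
    sdot (x + y + z) = sdot x + sdot y + sdot z + bl x y + bl x z + bl y z := by
  show (x.1 + y.1 + z.1) ⬝ᵥ (x.2 + y.2 + z.2) = _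
  simp only [add_dotProduct, dotProduct_add, sdot, bl]
  ring

end Main

/-- The symplectic action preserves e(m₁,m₂,m₃) for all triples of characteristics;
in particular it sends azygetic triples to azygetic triples. -/
theorem sympAct_preserves_e3 {g : ℕ} (A B C D : Matrix (Fin g) (Fin g) ℤ)
    (hσ : Matrix.fromBlocks A B C D ∈ Matrix.symplecticGroup (Fin g) ℤ)
    (m₁ m₂ m₃ : IChr g) :
    e3 (sympAct A B C D m₁) (sympAct A B C D m₂) (sympAct A B C D m₃) = e3 m₁ m₂ m₃ ∧
    (e3 m₁ m₂ m₃ = -1 →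
      e3 (sympAct A B C D m₁) (sympAct A B C D m₂) (sympAct A B C D m₃) = -1) := by
  -- extract the symplectic relations
  have hT := SymplecticGroup.mem_iff'.mp hσ
  rw [Matrix.J, Matrix.fromBlocks_transpose, Matrix.fromBlocks_multiply,
    Matrix.fromBlocks_multiply] at hT
  simp only [Matrix.mul_zero, Matrix.mul_one, Matrix.mul_neg, Matrix.zero_mul, Matrix.neg_mul,
    zero_add, add_zero, neg_zero] at hT
  obtain ⟨h11, h12, h21, h22⟩ := Matrix.fromBlocks_inj.mp hT
  have hAC : Aᵀ * C = Cᵀ * A := by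
    have := h11; linear_combination (norm := (ext i j; simp; try ring_nf)) -this
  have hAD : Aᵀ * D = 1 + Cᵀ * B := by linear_combination (norm := (ext i j; simp; try ring_nf)) -h12
  have hDA : Dᵀ * A = 1 + Bᵀ * C := by linear_combination (norm := (ext i j; simp; try ring_nf)) h21
  have hBD : Bᵀ * D = Dᵀ * B := by linear_combination (norm := (ext i j; simp; try ring_nf)) -h22
  -- parity bookkeeping
  obtain ⟨k₁, hk₁⟩ := bl_sympAct A B C D hDA hAD hBD hAC m₁ m₂
  obtain ⟨k₂, hk₂⟩ := bl_sympAct A B C D hDA hAD hBD hAC m₁ m₃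
  obtain ⟨k₃, hk₃⟩ := bl_sympAct A B C D hDA hAD hBD hAC m₂ m₃
  set n₁ := sympAct A B C D m₁
  set n₂ := sympAct A B C D m₂
  set n₃ := sympAct A B C D m₃
  have hE : (sdot n₁ + sdot n₂ + sdot n₃ + sdot (n₁ + n₂ + n₃))
      = (sdot m₁ + sdot m₂ + sdot m₃ + sdot (m₁ + m₂ + m₃))
        + 2 * (sdot n₁ + sdot n₂ + sdot n₃ - sdot m₁ - sdot m₂ - sdot m₃
          + crossT A B C D m₁ + crossT A B C D m₂ + crossT A B C D m₃ + k₁ + k₂ + k₃) := by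
    rw [sdot_triple n₁ n₂ n₃, sdot_triple m₁ m₂ m₃, hk₁, hk₂, hk₃]
    ring
  have hmod : (sdot n₁ + sdot n₂ + sdot n₃ + sdot (n₁ + n₂ + n₃)) % 2
      = (sdot m₁ + sdot m₂ + sdot m₃ + sdot (m₁ + m₂ + m₃)) % 2 := by omega
  have heq : e3 n₁ n₂ n₃ = e3 m₁ m₂ m₃ := by
    rw [e3_eq, e3_eq, hmod]
  exact ⟨heq, fun h => heq.trans h⟩
end
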